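/- Let ε = exp(2πi/7) and define the 3×3 complex matrices E₁ = (1/7)·[[1,1,1],[1,1,1],[1,1,1]], E₂ = (1/7)·[[1,ε⁶,ε²],[ε,1,ε³],[ε⁵,ε⁴,1]], E₃ = (1/7)·[[1,ε²,ε³],[ε⁵,1,ε],[ε⁴,ε⁶,1]], E₄ = (1/7)·[[1,ε⁴,ε⁶],[ε³,1,ε²],[ε,ε⁵,1]], and E₅, E₆, E₇ the entrywise complex conjugates of E₂, E₃, E₄ respectively. Then Tr(E_i E_j) = 2/49 for all i ≠ j; equivalently, the rank-one projections P_i = (7/3)·E_i satisfy Tr(P_i P_j) = 2/9 for i ≠ j. -/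

import Mathlib

open Matrix

/-- `ε = exp(2πi/7)`. -/
noncomputable def eps : ℂ := Complex.exp (2 * Real.pi * Complex.I / 7)

/-- The seven matrices of the qutrit example of Section 6. -/
noncomputable def qutritPOVM : Fin 7 → Matrix (Fin 3) (Fin 3) ℂ :=
  ![(1 / 7 : ℂ) • !![1, 1, 1; 1, 1, 1; 1, 1, 1],
    (1 / 7 : ℂ) • !![1, eps ^ 6, eps ^ 2; eps, 1, eps ^ 3; eps ^ 5, eps ^ 4, 1],
    (1 / 7 : ℂ) • !![1, eps ^ 2, eps ^ 3; eps ^ 5, 1, eps; eps ^ 4, eps ^ 6, 1],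
    (1 / 7 : ℂ) • !![1, eps ^ 4, eps ^ 6; eps ^ 3, 1, eps ^ 2; eps, eps ^ 5, 1],
    ((1 / 7 : ℂ) • !![1, eps ^ 6, eps ^ 2; eps, 1, eps ^ 3; eps ^ 5, eps ^ 4, 1]).map (starRingEnd ℂ),
    ((1 / 7 : ℂ) • !![1, eps ^ 2, eps ^ 3; eps ^ 5, 1, eps; eps ^ 4, eps ^ 6, 1]).map (starRingEnd ℂ),
    ((1 / 7 : ℂ) • !![1, eps ^ 4, eps ^ 6; eps ^ 3, 1, eps ^ 2; eps, eps ^ 5, 1]).map (starRingEnd ℂ)]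


/-! Write `ψ` for the standard additive character of `ZMod 7`, so that `ψ r = ε ^ r`. Each
matrix is `(1/7) (ψ (x a - x b))_{ab}` for an exponent vector `x : Fin 3 → ZMod 7`, hence
`7² Tr(E_i E_j) = ∑_{a,b} ψ (d a - d b)` with `d = x_i - x_j`. For `i ≠ j` the three entries of
`d` form a `(7, 3, 1)` difference set: every nonzero residue is `d a - d b` for exactly one pair
`(a, b)`. The double sum is then `3 + ∑_{r ≠ 0} ψ r = 3 - 1 = 2`. -/

open Finset

section DifferenceSet

variable {G ι : Type*} [AddCommGroup G] [DecidableEq G] [Fintype ι]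

def IsDifferenceSet (d : ι → G) (l : ℕ) : Prop :=
  Function.Injective d ∧ ∀ r ≠ 0, #{p : ι × ι | d p.1 - d p.2 = r} = l

lemma card_filter_sub_eq_zero {d : ι → G} (hd : Function.Injective d) :
    #{p : ι × ι | d p.1 - d p.2 = 0} = Fintype.card ι := by
  have hdiag : ({p : ι × ι | d p.1 - d p.2 = 0} : Finset (ι × ι)) = univ.diag := by
    ext p
    simp [sub_eq_zero, hd.eq_iff]
  rw [hdiag, diag_card, card_univ]

lemma IsDifferenceSet.sum_apply_sub [Fintype G] {R : Type*} [CommRing R] [IsDomain R]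
    {d : ι → G} {l : ℕ} (hd : IsDifferenceSet d l) {ψ : AddChar G R} (hψ : ψ ≠ 1) :
    ∑ p : ι × ι, ψ (d p.1 - d p.2) = Fintype.card ι - l := by
  have hfiber (r : G) : (#{p : ι × ι | d p.1 - d p.2 = r} : R) * ψ r =
      l * ψ r + if r = 0 then (Fintype.card ι - l : R) else 0 := by
    by_cases hr : r = 0
    · simp [hr, card_filter_sub_eq_zero hd.1]
    · simp [hr, hd.2 r hr]
  calc ∑ p : ι × ι, ψ (d p.1 - d p.2)
      = ∑ r, (#{p : ι × ι | d p.1 - d p.2 = r} : R) * ψ r := by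
        rw [← sum_fiberwise univ (fun p : ι × ι => d p.1 - d p.2)]
        refine sum_congr rfl fun r _ => ?_
        rw [sum_congr rfl fun p hp => by rw [(mem_filter.1 hp).2], sum_const, nsmul_eq_mul]
    _ = Fintype.card ι - l := by
        simp only [hfiber, sum_add_distrib, ← mul_sum, AddChar.sum_eq_zero_of_ne_one hψ,
          sum_ite_eq', mem_univ, if_true]
        ring

end DifferenceSet

section CharMatrix

variable {G ι R : Type*} [AddCommGroup G] [CommRing R]

def charMatrix (ψ : AddChar G R) (x : ι → G) : Matrix ι ι R :=
  Matrix.of fun a b => ψ (x a - x b)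

lemma trace_charMatrix_mul [Fintype ι] (ψ : AddChar G R) (x y : ι → G) :
    (charMatrix ψ x * charMatrix ψ y).trace = ∑ p : ι × ι, ψ ((x - y) p.1 - (x - y) p.2) := by
  simp only [trace, Matrix.diag, mul_apply, charMatrix, of_apply, ← AddChar.map_add_eq_mul,
    Fintype.sum_prod_type, Pi.sub_apply]
  refine sum_congr rfl fun a _ => sum_congr rfl fun b _ => congrArg ψ ?_
  abel

end CharMatrix

lemma ZMod.stdAddChar_ne_one {N : ℕ} [NeZero N] (hN : 1 < N) :
    (ZMod.stdAddChar : AddChar (ZMod N) ℂ) ≠ 1 := by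
  have : Fact (1 < N) := ⟨hN⟩
  simpa using ZMod.isPrimitive_stdAddChar N one_ne_zero

lemma stdAddChar_one_eq_eps : ZMod.stdAddChar (1 : ZMod 7) = eps := by
  have h := ZMod.stdAddChar_coe (N := 7) 1
  simp only [Int.cast_one, mul_one] at h
  rw [h, eps]
  push_cast
  ring_nf

def qutritExponents : Fin 7 → Fin 3 → ZMod 7 :=
  ![![0, 0, 0], ![0, 1, 5], ![0, 5, 4], ![0, 3, 1], ![0, 6, 2], ![0, 2, 3], ![0, 4, 6]]

lemma isDifferenceSet_qutritExponents_sub {i j : Fin 7} (hij : i ≠ j) :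
    IsDifferenceSet (qutritExponents i - qutritExponents j) 1 := by
  revert i j
  unfold IsDifferenceSet qutritExponents
  decide

lemma qutritPOVM_eq_smul_charMatrix (k : Fin 7) :
    qutritPOVM k = (1 / 7 : ℂ) • charMatrix ZMod.stdAddChar (qutritExponents k) := by
  ext a b
  fin_cases k <;> fin_cases a <;> fin_cases b <;>
    simp [qutritPOVM, qutritExponents, charMatrix, ← stdAddChar_one_eq_eps,
      ← AddChar.map_neg_eq_conj, ← AddChar.map_nsmul_eq_pow, map_ofNat]
  all_goals exact congrArg _ (by decide)

/-- Constant pairwise overlaps: `Tr(E_i E_j) = 2/49` for `i ≠ j`, equivalently the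
projections `P_i = (7/3)·E_i` satisfy `Tr(P_i P_j) = 2/9` for `i ≠ j`. -/
theorem qutritPOVM_overlap (i j : Fin 7) (hij : i ≠ j) :
    (qutritPOVM i * qutritPOVM j).trace = 2 / 49 ∧
    (((7 / 3 : ℂ) • qutritPOVM i) * ((7 / 3 : ℂ) • qutritPOVM j)).trace = 2 / 9 := by
  have hE : (qutritPOVM i * qutritPOVM j).trace = 2 / 49 := by
    rw [qutritPOVM_eq_smul_charMatrix, qutritPOVM_eq_smul_charMatrix, smul_mul_smul_comm,
      trace_smul, trace_charMatrix_mul,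
      (isDifferenceSet_qutritExponents_sub hij).sum_apply_sub (ZMod.stdAddChar_ne_one (by norm_num))]
    norm_num
  refine ⟨hE, ?_⟩
  rw [smul_mul_smul_comm, trace_smul, hE]
  norm_num
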